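/- Let I ⊆ R = K[x_0,...,x_n] be a saturated strongly stable ideal and x^A an expandable minimal generator of I (i.e., no right-shift of x^A is a minimal generator of I). Then the expansion I^exp, generated by (G(I) \ {x^A}) ∪ {x^A x_r, x^A x_{r+1},..., x^A x_{n−1}} with r = max(x^A), is a saturated strongly stable ideal. -/

import Mathlib

open MvPolynomial

noncomputable section

/-- The polynomial ring `K[x_0,…,x_n]` in `n+1` variables. -/
abbrev PR (K : Type*) [Field K] (n : ℕ) := MvPolynomial (Fin (n+1)) K

variable {K : Type*} [Field K] {n : ℕ}

/-- The monomial `x^A`. -/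
def mon (A : Fin (n+1) →₀ ℕ) : PR K n := monomial A 1

/-- Total degree of the monomial with exponent vector `A`. -/
def mdeg (A : Fin (n+1) →₀ ℕ) : ℕ := ∑ i, A i

/-- The largest index of a variable dividing `x^A` (0 if `A = 0`). -/
def maxIdx (A : Fin (n+1) →₀ ℕ) : Fin (n+1) := WithBot.unbotD 0 (A.support.max)

/-- The exponent vector of `(x_i / x_j) · x^A`. -/
def shiftM (A : Fin (n+1) →₀ ℕ) (i j : Fin (n+1)) : Fin (n+1) →₀ ℕ :=
  A + Finsupp.single i 1 - Finsupp.single j 1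

/-- `I` is a monomial ideal: generated by a set of monomials. -/
def IsMonomialIdeal (I : Ideal (PR K n)) : Prop :=
  ∃ S : Set (Fin (n+1) →₀ ℕ), I = Ideal.span ((fun A => (mon A : PR K n)) '' S)

/-- Strongly stable monomial ideal. -/
def StronglyStable (I : Ideal (PR K n)) : Prop :=
  ∀ A : Fin (n+1) →₀ ℕ, mon A ∈ I → ∀ i j : Fin (n+1), A j ≠ 0 → i < j →
    mon (shiftM A i j) ∈ I

/-- Stable monomial ideal. -/
def Stable (I : Ideal (PR K n)) : Prop :=
  ∀ A : Fin (n+1) →₀ ℕ, A ≠ 0 → mon A ∈ I → ∀ i : Fin (n+1), i < maxIdx A →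
    mon (shiftM A i (maxIdx A)) ∈ I

/-- `x^A` is a minimal monomial generator of `I`. -/
def MinGen (I : Ideal (PR K n)) (A : Fin (n+1) →₀ ℕ) : Prop :=
  mon A ∈ I ∧ ∀ B : Fin (n+1) →₀ ℕ, B ≤ A → B ≠ A → mon B ∉ I

/-- The set of exponent vectors of minimal monomial generators of `I`. -/
def Gens (I : Ideal (PR K n)) : Set (Fin (n+1) →₀ ℕ) := {A | MinGen I A}

/-- The irrelevant maximal ideal `(x_0,…,x_n)`. -/
def irrIdeal (K : Type*) [Field K] (n : ℕ) : Ideal (PR K n) :=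
  Ideal.span (Set.range fun i : Fin (n+1) => (X i : PR K n))

/-- `I` is saturated: `(I : (x_0,…,x_n)) = I`. -/
def Saturated (I : Ideal (PR K n)) : Prop :=
  Submodule.colon I (irrIdeal K n) = I

/-- The saturation `∪ₖ (I : (x_0,…,x_n)^k)`. -/
def saturationOf (I : Ideal (PR K n)) : Ideal (PR K n) :=
  ⨆ k : ℕ, Submodule.colon I (((irrIdeal K n) ^ k : Ideal (PR K n)) : Set (PR K n))

/-- The Hilbert function of `R/I`: `j ↦ dim_K [R/I]_j`. -/
def hilbF {σ : Type*} (I : Ideal (MvPolynomial σ K)) (j : ℕ) : ℕ :=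
  Module.finrank K
    ((homogeneousSubmodule σ K j).map (Ideal.Quotient.mkₐ K I).toLinearMap)

/-- `p` is the Hilbert polynomial of `R/I`. -/
def IsHilbPoly {σ : Type*} (I : Ideal (MvPolynomial σ K)) (p : Polynomial ℚ) : Prop :=
  ∃ N : ℕ, ∀ j : ℕ, N ≤ j → p.eval (j : ℚ) = (hilbF I j : ℚ)

/-- The binomial-coefficient polynomial `C(q, k) = q(q-1)⋯(q-k+1)/k!`. -/
def choosePoly (q : Polynomial ℚ) (k : ℕ) : Polynomial ℚ :=
  ((k.factorial : ℚ))⁻¹ • ∏ j ∈ Finset.range k, (q - Polynomial.C (j : ℚ))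

/-- The canonical representation `p(z) = Σ_{i=0}^d [C(z+i,i+1) − C(z+i−b_i,i+1)]`. -/
def canonicalHP (d : ℕ) (b : ℕ → ℕ) : Polynomial ℚ :=
  ∑ i ∈ Finset.range (d+1),
    (choosePoly (Polynomial.X + Polynomial.C (i : ℚ)) (i+1)
      - choosePoly (Polynomial.X + Polynomial.C (i : ℚ) - Polynomial.C (b i : ℚ)) (i+1))

/-- `x^A >_lex x^B`. -/
def LexGt (A B : Fin (n+1) →₀ ℕ) : Prop :=
  ∃ i : Fin (n+1), (∀ j : Fin (n+1), j < i → A j = B j) ∧ B i < A i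

/-- `I` is a lexsegment ideal. -/
def IsLexsegment (I : Ideal (PR K n)) : Prop :=
  IsMonomialIdeal I ∧ ∀ A B : Fin (n+1) →₀ ℕ, mdeg A = mdeg B → mon B ∈ I →
    LexGt A B → mon A ∈ I

/-- `I` is a homogeneous ideal. -/
def Homog (I : Ideal (PR K n)) : Prop :=
  ∀ f ∈ I, ∀ j : ℕ, homogeneousComponent j f ∈ I

open Fin.NatCast in
/-- The set of right-shifts of `x^A`. -/
def rightShifts (A : Fin (n+1) →₀ ℕ) : Set (Fin (n+1) →₀ ℕ) :=
  {B | ∃ i : Fin (n+1), (i : ℕ) + 2 ≤ n ∧ A i ≠ 0 ∧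
    B = shiftM A ((((i : ℕ) + 1 : ℕ)) : Fin (n+1)) i}

open Fin.NatCast in
/-- The set of left-shifts of `x^A`. -/
def leftShifts (A : Fin (n+1) →₀ ℕ) : Set (Fin (n+1) →₀ ℕ) :=
  {B | ∃ i : Fin (n+1), 1 ≤ (i : ℕ) ∧ (i : ℕ) + 1 ≤ n ∧ A i ≠ 0 ∧
    B = shiftM A ((((i : ℕ) - 1 : ℕ)) : Fin (n+1)) i}

/-- The monomials `x^A x_r, …, x^A x_{n-1}` with `r = max(x^A)`. -/
def expSet (A : Fin (n+1) →₀ ℕ) : Set (Fin (n+1) →₀ ℕ) :=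
  {B | ∃ j : Fin (n+1), ((maxIdx A : ℕ)) ≤ (j : ℕ) ∧ (j : ℕ) + 1 ≤ n ∧
    B = A + Finsupp.single j 1}

/-- `x^A ≠ 1` is expandable in `I`. -/
def Expandable (I : Ideal (PR K n)) (A : Fin (n+1) →₀ ℕ) : Prop :=
  A ≠ 0 ∧ MinGen I A ∧ ∀ B ∈ rightShifts A, ¬ MinGen I B

open Fin.NatCast in
/-- `x^A ≠ 1` is contractible in `I`. -/
def Contractible (I : Ideal (PR K n)) (A : Fin (n+1) →₀ ℕ) : Prop :=
  A ≠ 0 ∧ mon A ∉ I ∧ MinGen I (A + Finsupp.single (((n - 1 : ℕ)) : Fin (n+1)) 1) ∧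
    ∀ B ∈ leftShifts A, mon B ∈ I

/-- The expansion of `x^A` in `I`. -/
def expansionIdeal (I : Ideal (PR K n)) (A : Fin (n+1) →₀ ℕ) : Ideal (PR K n) :=
  Ideal.span ((fun B => (mon B : PR K n)) '' ((Gens I \ {A}) ∪ expSet A))

/-- The contraction of `x^A` in `I`. -/
def contractionIdeal (I : Ideal (PR K n)) (A : Fin (n+1) →₀ ℕ) : Ideal (PR K n) :=
  Ideal.span ((fun B => (mon B : PR K n)) '' ((Gens I ∪ {A}) \ expSet A))

open Fin.NatCast in
/-- Setting `x_{n-1} = x_n = 1` in the exponent vector `A`. -/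
def stripLastTwo (A : Fin (n+1) →₀ ℕ) : Fin (n+1) →₀ ℕ :=
  Finsupp.update (Finsupp.update A (((n : ℕ)) : Fin (n+1)) 0) (((n - 1 : ℕ)) : Fin (n+1)) 0

/-- The double saturation `sat_{x_{n-1},x_n}(I)` (as an ideal of `R`). -/
def doubleSat (I : Ideal (PR K n)) : Ideal (PR K n) :=
  Ideal.span ((fun A => (mon (stripLastTwo A) : PR K n)) '' Gens I)

/-- Restriction of an exponent vector to the first `n` variables. -/
def restrictExp (A : Fin (n+1) →₀ ℕ) : Fin n →₀ ℕ :=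
  Finsupp.comapDomain Fin.castSucc A (Fin.castSucc_injective n).injOn

/-- The ideal `I · R^{(1)}` in `K[x_0,…,x_{n-1}]` (for saturated monomial `I`). -/
def restrictIdeal (I : Ideal (PR K n)) : Ideal (MvPolynomial (Fin n) K) :=
  Ideal.span ((fun A => (monomial (restrictExp A) (1 : K) : MvPolynomial (Fin n) K)) '' Gens I)

/-- Lex order on exponent vectors in `n` variables. -/
def LexGt' (A B : Fin n →₀ ℕ) : Prop :=
  ∃ i : Fin n, (∀ j : Fin n, j < i → A j = B j) ∧ B i < A i

/-- Monomial ideal in `K[x_0,…,x_{n-1}]`. -/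
def IsMonomialIdeal' (I : Ideal (MvPolynomial (Fin n) K)) : Prop :=
  ∃ S : Set (Fin n →₀ ℕ),
    I = Ideal.span ((fun A => (monomial A (1 : K) : MvPolynomial (Fin n) K)) '' S)

/-- Lexsegment ideal in `K[x_0,…,x_{n-1}]`. -/
def IsLexsegment' (I : Ideal (MvPolynomial (Fin n) K)) : Prop :=
  IsMonomialIdeal' I ∧ ∀ A B : Fin n →₀ ℕ, (∑ i, A i) = (∑ i, B i) →
    monomial B (1 : K) ∈ I → LexGt' A B → monomial A (1 : K) ∈ I

/-- `I` is almost lexsegment: saturated strongly stable with `I·R^{(1)}` lexsegment. -/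
def AlmostLex (I : Ideal (PR K n)) : Prop :=
  IsMonomialIdeal I ∧ StronglyStable I ∧ Saturated I ∧ IsLexsegment' (restrictIdeal I)

/-- A graded free resolution of the ideal `I`, with `rank i` the rank of the `i`-th
free module and `twist i k` the degrees of the standard basis elements. -/
structure GradedFreeRes (I : Ideal (PR K n)) where
  rank : ℕ → ℕ
  twist : (i : ℕ) → Fin (rank i) → ℕ
  diff : (i : ℕ) → ((Fin (rank (i+1)) → PR K n) →ₗ[PR K n] (Fin (rank i) → PR K n))
  aug : (Fin (rank 0) → PR K n) →ₗ[PR K n] PR K n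
  aug_range : LinearMap.range aug = I
  aug_graded : ∀ k, aug (Pi.single k 1) ∈ homogeneousSubmodule (Fin (n+1)) K (twist 0 k)
  diff_graded : ∀ i k l, diff i (Pi.single k 1) l = 0 ∨
    (twist i l ≤ twist (i+1) k ∧
      diff i (Pi.single k 1) l ∈ homogeneousSubmodule (Fin (n+1)) K (twist (i+1) k - twist i l))
  exact_aug : LinearMap.range (diff 0) = LinearMap.ker aug
  exact_diff : ∀ i, LinearMap.range (diff (i+1)) = LinearMap.ker (diff i)

/-- A resolution is minimal if all differential entries lie in the irrelevant ideal. -/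
def MinimalRes {I : Ideal (PR K n)} (F : GradedFreeRes I) : Prop :=
  ∀ i k l, constantCoeff (F.diff i (Pi.single k 1) l) = 0

end

/-!
Minimal generators of a saturated strongly stable ideal do not involve `x_n`, so whether `x^C` lies
in `I` depends only on `C` off `x_n`, and the expansion at `x^A` consists of the monomials of `I`
other than the `x^A x_n^t`. Strong stability of the expansion can then only fail if some
`x_j x^A / x_i` with `i < j` lies in `I`. Such a monomial is a minimal generator of `I`, and lowering
`j` step by step by strong stability reaches a minimal generator that is a right-shift of `x^A`,
contradicting expandability.
-/

lemma Finsupp.erase_le {ι : Type*} (a : ι) (C : ι →₀ ℕ) : C.erase a ≤ C := by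
  classical
  intro k
  rw [Finsupp.erase_apply]
  split_ifs <;> simp

lemma Finsupp.le_erase_of_le {ι : Type*} {a : ι} {B C : ι →₀ ℕ} (h : B ≤ C) (hB : B a = 0) :
    B ≤ C.erase a := by
  classical
  intro k
  rw [Finsupp.erase_apply]
  split_ifs with hk
  · simp [hk, hB]
  · exact h k

lemma Finsupp.add_single_le_of_lt {ι : Type*} {k : ι} {A C : ι →₀ ℕ} (h : A ≤ C)
    (hk : A k < C k) : A + Finsupp.single k 1 ≤ C := by
  classical
  intro l
  rw [Finsupp.add_apply, Finsupp.single_apply]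
  split_ifs with hl
  · exact hl ▸ hk
  · simpa using h l

section

variable {K : Type*} [Field K] {n : ℕ}

lemma shiftM_apply (A : Fin (n+1) →₀ ℕ) (i j k : Fin (n+1)) :
    shiftM A i j k = A k + (if i = k then 1 else 0) - (if j = k then 1 else 0) := by
  simp [shiftM, Finsupp.single_apply]

lemma shiftM_shiftM {A : Fin (n+1) →₀ ℕ} {a b c : Fin (n+1)} (hcb : c ≠ b) :
    shiftM (shiftM A a b) c a = shiftM A c b := by
  ext k
  simp only [shiftM_apply]
  split_ifs <;> omega

lemma mem_span_mon_iff {S : Set (Fin (n+1) →₀ ℕ)} {f : PR K n} :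
    f ∈ Ideal.span ((fun A => (mon A : PR K n)) '' S) ↔ ∀ m ∈ f.support, ∃ B ∈ S, B ≤ m :=
  mem_ideal_span_monomial_image

lemma mon_mem_span_iff {S : Set (Fin (n+1) →₀ ℕ)} {C : Fin (n+1) →₀ ℕ} :
    (mon C : PR K n) ∈ Ideal.span ((fun A => (mon A : PR K n)) '' S) ↔ ∃ B ∈ S, B ≤ C := by
  classical
  rw [mem_span_mon_iff, mon, support_monomial, if_neg one_ne_zero]
  simp

lemma mon_mem_of_le {I : Ideal (PR K n)} {B C : Fin (n+1) →₀ ℕ}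
    (hB : (mon B : PR K n) ∈ I) (h : B ≤ C) : (mon C : PR K n) ∈ I := by
  have heq : (mon C : PR K n) = mon (C - B) * mon B := by
    rw [mon, mon, mon, monomial_mul, mul_one, tsub_add_cancel_of_le h]
  exact heq ▸ I.mul_mem_left _ hB

lemma mon_mul_X (B : Fin (n+1) →₀ ℕ) (i : Fin (n+1)) :
    (mon B : PR K n) * X i = mon (B + Finsupp.single i 1) := by
  rw [mon, mon, X, monomial_mul, mul_one]

lemma mem_colon_irrIdeal_iff {I : Ideal (PR K n)} {f : PR K n} :
    f ∈ Submodule.colon I (irrIdeal K n) ↔ ∀ i, f * X i ∈ I := by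
  simp only [irrIdeal, Ideal.colon_span, Submodule.mem_colon, Set.forall_mem_range, smul_eq_mul]

lemma exists_minGen_le {I : Ideal (PR K n)} {C : Fin (n+1) →₀ ℕ} (hC : (mon C : PR K n) ∈ I) :
    ∃ B ∈ Gens I, B ≤ C := by
  obtain ⟨B, ⟨hBC, hBI⟩, hmin⟩ :=
    wellFounded_lt.has_min {B | B ≤ C ∧ (mon B : PR K n) ∈ I} ⟨C, le_rfl, hC⟩
  exact ⟨B, ⟨hBI, fun B' hB' hne hB'I => hmin B' ⟨hB'.trans hBC, hB'I⟩ (lt_of_le_of_ne hB' hne)⟩,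
    hBC⟩

lemma maxIdx_apply_ne_zero {A : Fin (n+1) →₀ ℕ} (hA : A ≠ 0) : A (maxIdx A) ≠ 0 := by
  obtain ⟨m, hm⟩ := Finset.max_of_nonempty (Finsupp.support_nonempty_iff.mpr hA)
  have : maxIdx A = m := by rw [maxIdx, hm]; rfl
  exact this ▸ Finsupp.mem_support_iff.mp (Finset.mem_of_max hm)

variable {I : Ideal (PR K n)}

/-- Over a saturated strongly stable ideal, `x^B / x_n` lies in `(I : 𝔪)`, since multiplying it
by `x_i` gives the shift `x_i x^B / x_n`. -/
lemma MinGen.last_eq_zero (hss : StronglyStable I) (hsat : Saturated I)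
    {B : Fin (n+1) →₀ ℕ} (hB : MinGen I B) : B (Fin.last n) = 0 := by
  by_contra hne
  set B' := B - Finsupp.single (Fin.last n) 1
  have hB'I : (mon B' : PR K n) ∈ I := by
    rw [← hsat, mem_colon_irrIdeal_iff]
    intro i
    rw [mon_mul_X]
    rcases (Fin.le_last i).lt_or_eq with hi | rfl
    · convert hss B hB.1 i (Fin.last n) hne hi using 2
      ext k
      simp only [B', shiftM_apply, Finsupp.add_apply, Finsupp.tsub_apply, Finsupp.single_apply]
      split_ifs <;> omega
    · rw [tsub_add_cancel_of_le (Finsupp.single_le_iff.mpr (Nat.one_le_iff_ne_zero.mpr hne))]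
      exact hB.1
  refine hB.2 B' tsub_le_self (fun h => hne ?_) hB'I
  have := congrArg (· (Fin.last n)) h
  simp only [B', Finsupp.tsub_apply, Finsupp.single_eq_same] at this
  omega

lemma mon_mem_iff_erase_last (hss : StronglyStable I) (hsat : Saturated I)
    {C : Fin (n+1) →₀ ℕ} : (mon C : PR K n) ∈ I ↔ (mon (C.erase (Fin.last n)) : PR K n) ∈ I := by
  refine ⟨fun hC => ?_, fun h => mon_mem_of_le h (Finsupp.erase_le _ _)⟩
  obtain ⟨B, hB, hBC⟩ := exists_minGen_le hC
  exact mon_mem_of_le hB.1 (Finsupp.le_erase_of_le hBC (hB.last_eq_zero hss hsat))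

lemma MinGen.exists_minGen_ne_le_add_single (hss : StronglyStable I)
    {A : Fin (n+1) →₀ ℕ} (hA : MinGen I A) {i : Fin (n+1)} (hi : i < maxIdx A) :
    ∃ B ∈ Gens I, B ≠ A ∧ B ≤ A + Finsupp.single i 1 := by
  have hA0 : A ≠ 0 := by
    rintro rfl
    simp [maxIdx] at hi
  have hr := maxIdx_apply_ne_zero hA0
  obtain ⟨B, hB, hle⟩ := exists_minGen_le (hss A hA.1 i (maxIdx A) hr hi)
  refine ⟨B, hB, fun h => ?_, fun k => ?_⟩
  · have := hle (maxIdx A)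
    rw [h, shiftM_apply, if_neg hi.ne, if_pos rfl] at this
    omega
  · have := hle k
    rw [shiftM_apply] at this
    rw [Finsupp.add_apply, Finsupp.single_apply]
    split_ifs at this ⊢ <;> omega

/-- A proper divisor of `x_j x^A / x_i` dividing `x^A` would contradict minimality of `x^A`; one
that does not has `x_i g / x_j` as a proper divisor of `x^A` in `I`. -/
lemma MinGen.shiftM_of_mem (hss : StronglyStable I) {A : Fin (n+1) →₀ ℕ} (hA : MinGen I A)
    {i j : Fin (n+1)} (hij : i < j) (hAi : A i ≠ 0) (hmem : (mon (shiftM A j i) : PR K n) ∈ I) :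
    MinGen I (shiftM A j i) := by
  refine ⟨hmem, fun g hg hne hgI => ?_⟩
  have hg' : ∀ k, g k ≤ A k + (if j = k then 1 else 0) - (if i = k then 1 else 0) := fun k => by
    simpa only [shiftM_apply] using hg k
  have hgi := hg' i
  rw [if_neg hij.ne', if_pos rfl] at hgi
  by_cases hgj : g j ≤ A j
  · refine hA.2 g (fun k => ?_) (by rintro rfl; omega) hgI
    have := hg' k
    split_ifs at this <;> subst_vars <;> omega
  · refine hA.2 (shiftM g i j) (fun k => ?_) (fun h => hne ?_) (hss g hgI i j (by omega) hij)
    · have := hg' k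
      rw [shiftM_apply]
      split_ifs at this ⊢ <;> subst_vars <;> omega
    · ext k
      have := congrArg (· k) h
      have := hg' k
      simp only [shiftM_apply] at *
      split_ifs at * <;> subst_vars <;> omega

/-- Induction on `j`: a member `x_j x^A / x_i` of `I` is a minimal generator, hence does not
involve `x_n`; for `j = i + 1` it is a right-shift, otherwise `x_{j-1} x^A / x_i` is in `I`. -/
lemma Expandable.mon_shiftM_not_mem (hss : StronglyStable I) (hsat : Saturated I)
    {A : Fin (n+1) →₀ ℕ} (hA : Expandable I A) {i : Fin (n+1)} (hAi : A i ≠ 0) :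
    ∀ j, i < j → (mon (shiftM A j i) : PR K n) ∉ I := by
  intro j
  induction j using Fin.induction with
  | zero => exact fun h => absurd h (Fin.not_lt_zero i)
  | succ j ih =>
    intro hij hmem
    have hmin := hA.2.1.shiftM_of_mem hss hij hAi hmem
    by_cases hlast : j.succ = Fin.last n
    · have := hmin.last_eq_zero hss hsat
      rw [hlast, shiftM_apply, if_pos rfl, if_neg (hlast ▸ hij).ne] at this
      omega
    · have hjn : (j : ℕ) + 1 < n := by
        have := Fin.val_ne_of_ne hlast
        simp only [Fin.val_succ, Fin.val_last] at this
        omega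
      rcases (Fin.le_castSucc_iff.mpr hij).eq_or_lt with rfl | hlt
      · refine hA.2.2 _ ⟨j.castSucc, by simp; omega, hAi, ?_⟩ hmin
        congr
        ext
        simp [Nat.mod_eq_of_lt (show (j : ℕ) + 1 < n + 1 by omega)]
      · refine ih hlt ?_
        rw [← shiftM_shiftM hlt.ne']
        exact hss _ hmem _ _ (by simp [shiftM_apply, hij.ne]) Fin.castSucc_lt_succ

lemma saturated_span_mon {S : Set (Fin (n+1) →₀ ℕ)} (hS : ∀ B ∈ S, B (Fin.last n) = 0) :
    Saturated (Ideal.span ((fun A => (mon A : PR K n)) '' S)) := by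
  refine le_antisymm (fun f hf => ?_) Ideal.le_colon
  have hfX := mem_colon_irrIdeal_iff.mp hf (Fin.last n)
  rw [mem_span_mon_iff] at hfX ⊢
  intro m hm
  obtain ⟨B, hB, hle⟩ := hfX (m + Finsupp.single (Fin.last n) 1)
    (by rwa [mem_support_iff, coeff_mul_X, ← mem_support_iff])
  refine ⟨B, hB, fun k => ?_⟩
  have := hle k
  rw [Finsupp.add_apply, Finsupp.single_apply] at this
  split_ifs at this with hk
  · rw [← hk, hS B hB]
    exact Nat.zero_le _
  · exact this

lemma expansion_generator_last_eq_zero (hss : StronglyStable I) (hsat : Saturated I)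
    {A : Fin (n+1) →₀ ℕ} (hA : MinGen I A) :
    ∀ B ∈ (Gens I \ {A}) ∪ expSet A, B (Fin.last n) = 0 := by
  rintro B (⟨hB, -⟩ | ⟨j, -, hj, rfl⟩)
  · exact MinGen.last_eq_zero hss hsat hB
  · rw [Finsupp.add_apply, hA.last_eq_zero hss hsat, Finsupp.single_apply,
      if_neg (fun h => by rw [h, Fin.val_last] at hj; omega), add_zero]

lemma mon_mem_expansionIdeal_iff (hss : StronglyStable I) (hsat : Saturated I)
    {A : Fin (n+1) →₀ ℕ} (hA : MinGen I A) {C : Fin (n+1) →₀ ℕ} :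
    (mon C : PR K n) ∈ expansionIdeal I A ↔
      (mon C : PR K n) ∈ I ∧ C.erase (Fin.last n) ≠ A := by
  rw [expansionIdeal, mon_mem_span_iff]
  constructor
  · rintro ⟨B, hB, hBC⟩
    have hBA (hCA : C.erase (Fin.last n) = A) : B ≤ A :=
      hCA ▸ Finsupp.le_erase_of_le hBC (expansion_generator_last_eq_zero hss hsat hA B hB)
    rcases hB with ⟨hB, hBne⟩ | ⟨j, -, -, rfl⟩
    · exact ⟨mon_mem_of_le hB.1 hBC, fun hCA => hA.2 B (hBA hCA) hBne hB.1⟩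
    · refine ⟨mon_mem_of_le hA.1 (le_self_add.trans hBC), fun hCA => ?_⟩
      have := hBA hCA j
      simp at this
  · rintro ⟨hC, hCA⟩
    obtain ⟨B, hB, hBC⟩ := exists_minGen_le hC
    by_cases hBA : B = A
    swap
    · exact ⟨B, Or.inl ⟨hB, hBA⟩, hBC⟩
    rw [hBA] at hBC
    obtain ⟨k, hk, hlt⟩ : ∃ k, k ≠ Fin.last n ∧ A k < C k := by
      by_contra! h
      refine hCA (le_antisymm (fun k => ?_) (Finsupp.le_erase_of_le hBC
        (hA.last_eq_zero hss hsat)))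
      rw [Finsupp.erase_apply]
      split_ifs with hk
      · exact Nat.zero_le _
      · exact h k hk
    by_cases hkr : maxIdx A ≤ k
    · refine ⟨_, Or.inr ⟨k, hkr, ?_, rfl⟩, Finsupp.add_single_le_of_lt hBC hlt⟩
      have := Fin.val_ne_of_ne hk
      simp only [Fin.val_last] at this
      omega
    · obtain ⟨B', hB', hne, hle⟩ := hA.exists_minGen_ne_le_add_single hss (not_le.mp hkr)
      exact ⟨B', Or.inl ⟨hB', hne⟩, hle.trans (Finsupp.add_single_le_of_lt hBC hlt)⟩


lemma Expandable.stronglyStable_expansionIdeal (hss : StronglyStable I) (hsat : Saturated I)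
    {A : Fin (n+1) →₀ ℕ} (hA : Expandable I A) : StronglyStable (expansionIdeal I A) := by
  intro C hC i j hCj hij
  rw [mon_mem_expansionIdeal_iff hss hsat hA.2.1] at hC ⊢
  refine ⟨hss C hC.1 i j hCj hij, fun hC'A => ?_⟩
  have hC'A' (k : Fin (n+1)) (hk : k ≠ Fin.last n) :
      C k + (if i = k then 1 else 0) - (if j = k then 1 else 0) = A k := by
    simpa [Finsupp.erase_apply, hk, shiftM_apply] using congrArg (· k) hC'A
  have hCA : C.erase (Fin.last n) = (shiftM A j i).erase (Fin.last n) := by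
    ext k
    by_cases hk : k = Fin.last n
    · simp [hk]
    · have := hC'A' k hk
      simp only [Finsupp.erase_apply, if_neg hk, shiftM_apply]
      split_ifs at this ⊢ <;> subst_vars <;> omega
  have hAi : A i ≠ 0 := by
    have := hC'A' i (hij.trans_le (Fin.le_last j)).ne
    rw [if_pos rfl, if_neg hij.ne'] at this
    omega
  refine hA.mon_shiftM_not_mem hss hsat hAi j hij ?_
  rw [mon_mem_iff_erase_last hss hsat, ← hCA, ← mon_mem_iff_erase_last hss hsat]
  exact hC.1

end

theorem expansion_saturated_stronglyStable_general
    {K : Type*} [Field K] {n : ℕ} (I : Ideal (PR K n))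
    (hss : StronglyStable I) (hsat : Saturated I)
    (A : Fin (n+1) →₀ ℕ) (hA : Expandable I A) :
    IsMonomialIdeal (expansionIdeal I A) ∧ StronglyStable (expansionIdeal I A) ∧
      Saturated (expansionIdeal I A) :=
  ⟨⟨_, rfl⟩, hA.stronglyStable_expansionIdeal hss hsat,
    saturated_span_mon (expansion_generator_last_eq_zero hss hsat hA.2.1)⟩

/-- the expansion of an expandable minimal generator of a saturated
strongly stable ideal is again a saturated strongly stable ideal. -/
theorem expansion_saturated_stronglyStable
    {K : Type*} [Field K] {n : ℕ} (hn : 2 ≤ n) (I : Ideal (PR K n))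
    (hmono : IsMonomialIdeal I) (hss : StronglyStable I) (hsat : Saturated I)
    (A : Fin (n+1) →₀ ℕ) (hA : Expandable I A) :
    IsMonomialIdeal (expansionIdeal I A) ∧ StronglyStable (expansionIdeal I A) ∧
      Saturated (expansionIdeal I A) :=
  expansion_saturated_stronglyStable_general I hss hsat A hA
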